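/- Let L be a finite set of d distinct 2-dimensional linear subspaces of ℂ³ with d ≥ 2, such that every 1-dimensional linear subspace of ℂ³ is contained in at most d − 2 members of L. For m ≥ 2 let ν_m be the number of 1-dimensional subspaces contained in exactly m members of L, and assume ν_m = 0 whenever 3m = 2d. Set C = (9/(d−3))·(d − 1 + Σ_m (m(m−1)/(2d−3m))·ν_m). Then C > 0 if every m with ν_m ≠ 0 satisfies 3m < 2d, and C < 0 if some m with ν_m ≠ 0 satisfies 3m > 2d. (Proposition 1.8, sign of the coefficient C_{−3/d}.) -/

import Mathlib

/-!
Two distinct lines meet in exactly one point, and two distinct points lie on at most one common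
line. Hence counting ordered pairs of distinct lines by their intersection point gives
`Σₘ m(m-1)νₘ ≤ d(d-1)`, and the multiplicities of two distinct points add up to at most `d + 1`.
Since any two lines of `ℙ²` meet, there is a double point, so `2 ≤ d - 2`.

If every occurring multiplicity satisfies `3m < 2d`, all summands of `C` are nonnegative. If a
point has multiplicity `m₀` with `3m₀ > 2d`, it is the only point of multiplicity `m₀`, every
other occurring `m` has `2d - 3m ≥ 3m₀ - d - 3 > 0`, and the pair count bounds the remaining
summands by `(d(d-1) - m₀(m₀-1))/(3m₀ - d - 3)`, which cannot compensate the negative term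
`-m₀(m₀-1)/(3m₀ - 2d)`.
-/

open Module Finset

namespace Submodule

variable {K V : Type*} [DivisionRing K] [AddCommGroup V] [Module K V] [FiniteDimensional K V]

theorem finrank_inf_lt_of_ne {S T : Submodule K V} (h : finrank K S = finrank K T) (hne : S ≠ T) :
    finrank K ↥(S ⊓ T) < finrank K S := by
  refine finrank_lt_finrank_of_lt (inf_le_left.lt_of_ne fun hST => hne ?_)
  exact eq_of_le_of_finrank_eq (hST ▸ inf_le_right) h

theorem finrank_lt_finrank_sup_of_ne {S T : Submodule K V} (h : finrank K S = finrank K T)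
    (hne : S ≠ T) : finrank K S < finrank K ↥(S ⊔ T) := by
  refine finrank_lt_finrank_of_lt (le_sup_left.lt_of_ne fun hST => hne ?_)
  exact (eq_of_le_of_finrank_eq (hST ▸ le_sup_right : T ≤ S) h.symm).symm

end Submodule

namespace LineArrangement

open scoped Classical

variable {K V : Type*} [DivisionRing K] [AddCommGroup V] [Module K V]

theorem eq_inf_of_le_of_le [FiniteDimensional K V] {p ℓ₁ ℓ₂ : Submodule K V}
    (hp : finrank K p = 1) (h₁ : finrank K ℓ₁ = 2) (h₂ : finrank K ℓ₂ = 2) (hne : ℓ₁ ≠ ℓ₂)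
    (hp₁ : p ≤ ℓ₁) (hp₂ : p ≤ ℓ₂) : p = ℓ₁ ⊓ ℓ₂ := by
  have := Submodule.finrank_inf_lt_of_ne (h₁.trans h₂.symm) hne
  exact Submodule.eq_of_le_of_finrank_le (le_inf hp₁ hp₂) (by omega)

theorem eq_sup_of_le_of_le [FiniteDimensional K V] {p q ℓ : Submodule K V}
    (hp : finrank K p = 1) (hq : finrank K q = 1) (hne : p ≠ q) (hℓ : finrank K ℓ = 2)
    (hpℓ : p ≤ ℓ) (hqℓ : q ≤ ℓ) : ℓ = p ⊔ q := by
  have := Submodule.finrank_lt_finrank_sup_of_ne (hp.trans hq.symm) hne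
  exact (Submodule.eq_of_le_of_finrank_le (sup_le hpℓ hqℓ) (by omega)).symm

variable (L : Finset (Submodule K V))

noncomputable def multiplicity (p : Submodule K V) : ℕ := #{ℓ ∈ L | p ≤ ℓ}

theorem ncard_setOf_mem_and_le (p : Submodule K V) :
    {ℓ | ℓ ∈ L ∧ p ≤ ℓ}.ncard = multiplicity L p := by
  rw [multiplicity, ← Set.ncard_coe_finset, coe_filter]

theorem multiplicity_le_card (p : Submodule K V) : multiplicity L p ≤ #L :=
  card_filter_le _ _

variable {L} [FiniteDimensional K V]

theorem multiplicity_add_multiplicity_le (hL : ∀ ℓ ∈ L, finrank K ℓ = 2) {p q : Submodule K V}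
    (hp : finrank K p = 1) (hq : finrank K q = 1) (hne : p ≠ q) :
    multiplicity L p + multiplicity L q ≤ #L + 1 := by
  have hinter : #({ℓ ∈ L | p ≤ ℓ} ∩ {ℓ ∈ L | q ≤ ℓ}) ≤ 1 := by
    refine card_le_one.2 fun a ha b hb => ?_
    simp only [mem_inter, mem_filter] at ha hb
    rw [eq_sup_of_le_of_le hp hq hne (hL a ha.1.1) ha.1.2 ha.2.2,
      eq_sup_of_le_of_le hp hq hne (hL b hb.1.1) hb.1.2 hb.2.2]
  have hunion : #({ℓ ∈ L | p ≤ ℓ} ∪ {ℓ ∈ L | q ≤ ℓ}) ≤ #L :=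
    card_le_card (union_subset (filter_subset _ _) (filter_subset _ _))
  have := card_union_add_card_inter {ℓ ∈ L | p ≤ ℓ} {ℓ ∈ L | q ≤ ℓ}
  rw [multiplicity, multiplicity]
  omega

theorem sum_multiplicity_mul_pred_le (hL : ∀ ℓ ∈ L, finrank K ℓ = 2)
    {P : Finset (Submodule K V)} (hP : ∀ p ∈ P, finrank K p = 1) :
    ∑ p ∈ P, multiplicity L p * (multiplicity L p - 1) ≤ #L * (#L - 1) := by
  have hdisj : (P : Set (Submodule K V)).PairwiseDisjoint fun p => {ℓ ∈ L | p ≤ ℓ}.offDiag := by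
    intro p hp q hq hne
    refine disjoint_left.2 fun ⟨a, b⟩ hpab hqab => hne ?_
    simp only [mem_offDiag, mem_filter] at hpab hqab
    obtain ⟨⟨ha, hpa⟩, ⟨hb, hpb⟩, hab⟩ := hpab
    rw [eq_inf_of_le_of_le (hP p hp) (hL a ha) (hL b hb) hab hpa hpb,
      eq_inf_of_le_of_le (hP q hq) (hL a ha) (hL b hb) hab hqab.1.2 hqab.2.1.2]
  have hsub : P.biUnion (fun p => {ℓ ∈ L | p ≤ ℓ}.offDiag) ⊆ L.offDiag :=
    biUnion_subset.2 fun p _ => offDiag_mono (filter_subset _ _)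
  have := card_le_card hsub
  rw [card_biUnion hdisj] at this
  simpa only [multiplicity, offDiag_card, Nat.mul_sub_one] using this

variable (L) in
noncomputable def multiplePoints : Finset (Submodule K V) :=
  {p ∈ (L ×ˢ L).image (fun ab => ab.1 ⊓ ab.2) | finrank K p = 1 ∧ 2 ≤ multiplicity L p}

theorem mem_multiplePoints (hL : ∀ ℓ ∈ L, finrank K ℓ = 2) {p : Submodule K V} :
    p ∈ multiplePoints L ↔ finrank K p = 1 ∧ 2 ≤ multiplicity L p := by
  refine ⟨fun hp => (mem_filter.1 hp).2, fun ⟨hp, h2⟩ => mem_filter.2 ⟨?_, hp, h2⟩⟩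
  obtain ⟨a, ha, b, hb, hab⟩ := one_lt_card.1 h2
  rw [mem_filter] at ha hb
  exact mem_image.2 ⟨(a, b), mem_product.2 ⟨ha.1, hb.1⟩,
    (eq_inf_of_le_of_le hp (hL a ha.1) (hL b hb.1) hab ha.2 hb.2).symm⟩

variable (L) in
def pointsOfMultiplicity (m : ℕ) : Set (Submodule K V) :=
  {p | finrank K p = 1 ∧ multiplicity L p = m}

theorem ncard_pointsOfMultiplicity (hL : ∀ ℓ ∈ L, finrank K ℓ = 2) {m : ℕ} (hm : 2 ≤ m) :
    (pointsOfMultiplicity L m).ncard = #{p ∈ multiplePoints L | multiplicity L p = m} := by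
  rw [← Set.ncard_coe_finset]
  congr 1
  ext p
  simp only [pointsOfMultiplicity, coe_filter, mem_multiplePoints hL, Set.mem_ofPred_eq]
  constructor
  · rintro ⟨hp, rfl⟩; exact ⟨⟨hp, hm⟩, rfl⟩
  · rintro ⟨⟨hp, -⟩, rfl⟩; exact ⟨hp, rfl⟩

theorem sum_Icc_mul_ncard_pointsOfMultiplicity_le (hL : ∀ ℓ ∈ L, finrank K ℓ = 2) :
    ∑ m ∈ Icc 2 #L, m * (m - 1) * (pointsOfMultiplicity L m).ncard ≤ #L * (#L - 1) := by
  have hmaps : ∀ p ∈ multiplePoints L, multiplicity L p ∈ Icc 2 #L := fun p hp =>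
    mem_Icc.2 ⟨((mem_multiplePoints hL).1 hp).2, multiplicity_le_card L p⟩
  calc _ = ∑ m ∈ Icc 2 #L, ∑ p ∈ multiplePoints L with multiplicity L p = m,
        multiplicity L p * (multiplicity L p - 1) := by
        refine sum_congr rfl fun m hm => ?_
        rw [ncard_pointsOfMultiplicity hL (mem_Icc.1 hm).1, sum_congr rfl fun p hp =>
          by rw [(mem_filter.1 hp).2], sum_const, smul_eq_mul, mul_comm]
    _ = ∑ p ∈ multiplePoints L, multiplicity L p * (multiplicity L p - 1) :=
        sum_fiberwise_of_maps_to hmaps _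
    _ ≤ #L * (#L - 1) :=
        sum_multiplicity_mul_pred_le hL fun p hp => ((mem_multiplePoints hL).1 hp).1

theorem ncard_pointsOfMultiplicity_le_one (hL : ∀ ℓ ∈ L, finrank K ℓ = 2) {m : ℕ} (hm : 2 ≤ m)
    (hL2m : #L + 1 < 2 * m) : (pointsOfMultiplicity L m).ncard ≤ 1 := by
  rw [ncard_pointsOfMultiplicity hL hm]
  refine card_le_one.2 fun p hp q hq => ?_
  rw [mem_filter, mem_multiplePoints hL] at hp hq
  by_contra hne
  have := multiplicity_add_multiplicity_le hL hp.1.1 hq.1.1 hne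
  omega

theorem exists_two_le_multiplicity (hV : finrank K V = 3) (hL : ∀ ℓ ∈ L, finrank K ℓ = 2)
    (hcard : 2 ≤ #L) : ∃ p : Submodule K V, finrank K p = 1 ∧ 2 ≤ multiplicity L p := by
  obtain ⟨a, ha, b, hb, hab⟩ := one_lt_card.1 hcard
  refine ⟨a ⊓ b, ?_, ?_⟩
  · have hlt := Submodule.finrank_inf_lt_of_ne ((hL a ha).trans (hL b hb).symm) hab
    have hsum := Submodule.finrank_sup_add_finrank_inf_eq a b
    have hsup := (a ⊔ b).finrank_le
    rw [hL a ha, hL b hb, hV] at *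
    omega
  · calc 2 = #{a, b} := (card_pair hab).symm
      _ ≤ multiplicity L (a ⊓ b) := card_le_card <| by
        simp [insert_subset_iff, mem_filter, ha, hb]

theorem sub_one_sub_div_add_div_neg {d m : ℚ} (hm : 2 * d + 1 ≤ 3 * m) (hmd : m ≤ d - 2) :
    d - 1 - m * (m - 1) / (3 * m - 2 * d) + (d * (d - 1) - m * (m - 1)) / (3 * m - d - 3) < 0 := by
  -- With `s = 3m - 2d - 1 ≥ 0` and `t = d - 2 - m ≥ 0` the numerator below is
  -- `-(48 + 96t + 60t² + 12t³ + 12s + 18st + 6st²)`.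
  have hs : 0 ≤ 3 * m - 2 * d - 1 := by linarith
  have ht : 0 ≤ d - 2 - m := by linarith
  have hB : 0 < 3 * m - 2 * d := by linarith
  have hA : 0 < 3 * m - d - 3 := by linarith
  rw [sub_div' hB.ne', div_add_div _ _ hB.ne' hA.ne']
  refine div_neg_of_neg_of_pos ?_ (mul_pos hB hA)
  nlinarith [mul_nonneg hs ht, mul_nonneg ht ht, mul_nonneg (mul_nonneg ht ht) ht,
      mul_nonneg hs (mul_nonneg ht ht)]

def poleCoeff (d : ℕ) (ν : ℕ → ℕ) : ℚ :=
  9 / ((d : ℚ) - 3) * ((d : ℚ) - 1 + ∑ m ∈ Icc 2 d,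
    (m : ℚ) * ((m : ℚ) - 1) / (2 * (d : ℚ) - 3 * (m : ℚ)) * (ν m : ℚ))

theorem poleCoeff_pos {d : ℕ} {ν : ℕ → ℕ} (hd : 4 ≤ d)
    (hsmall : ∀ m ∈ Icc 2 d, ν m ≠ 0 → 3 * m < 2 * d) : 0 < poleCoeff d ν := by
  have hd' : (4 : ℚ) ≤ d := by exact_mod_cast hd
  have hsum : 0 ≤ ∑ m ∈ Icc 2 d,
      (m : ℚ) * ((m : ℚ) - 1) / (2 * (d : ℚ) - 3 * (m : ℚ)) * (ν m : ℚ) := by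
    refine sum_nonneg fun m hm => ?_
    obtain h0 | h0 := eq_or_ne (ν m) 0
    · simp [h0]
    have hm2 : (2 : ℚ) ≤ m := by exact_mod_cast (mem_Icc.1 hm).1
    have hden : (3 * m : ℚ) < 2 * d := by exact_mod_cast hsmall m hm h0
    have : 0 ≤ (m : ℚ) * (m - 1) := by nlinarith
    exact mul_nonneg (div_nonneg this (by linarith)) (Nat.cast_nonneg _)
  exact mul_pos (div_pos (by norm_num) (by linarith)) (by linarith)

theorem poleCoeff_neg {d m₀ : ℕ} {ν : ℕ → ℕ} (hm₀ : 2 * d < 3 * m₀) (hm₀d : m₀ + 2 ≤ d)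
    (hν₀ : ν m₀ = 1) (hother : ∀ m ∈ Icc 2 d, m ≠ m₀ → ν m ≠ 0 → m + m₀ ≤ d + 1)
    (hpairs : ∑ m ∈ Icc 2 d, m * (m - 1) * ν m ≤ d * (d - 1)) : poleCoeff d ν < 0 := by
  have hpairsQ : ∑ m ∈ Icc 2 d, (m : ℚ) * (m - 1) * ν m ≤ d * (d - 1) := by
    have hcast (n : ℕ) : ((n * (n - 1) : ℕ) : ℚ) = n * (n - 1) := by cases n <;> simp
    have := (Nat.cast_le (α := ℚ)).2 hpairs
    simpa only [Nat.cast_sum, Nat.cast_mul _ (ν _), hcast] using this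
  have hm₀Q : 2 * (d : ℚ) + 1 ≤ 3 * m₀ := by exact_mod_cast hm₀
  have hm₀dQ : (m₀ : ℚ) ≤ d - 2 := by
    rw [le_sub_iff_add_le]; exact_mod_cast hm₀d
  have hm₀Icc : m₀ ∈ Icc 2 d := mem_Icc.2 ⟨by omega, by omega⟩
  set A : ℚ := 3 * m₀ - d - 3
  have hA : 0 < A := by linarith
  have hterm : ∀ m ∈ (Icc 2 d).erase m₀,
      (m : ℚ) * (m - 1) / (2 * d - 3 * m) * ν m ≤ (m : ℚ) * (m - 1) * ν m / A := by
    intro m hm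
    obtain ⟨hne, hmIcc⟩ := mem_erase.1 hm
    obtain h0 | h0 := eq_or_ne (ν m) 0
    · simp [h0]
    have hm2 : (2 : ℚ) ≤ m := by exact_mod_cast (mem_Icc.1 hmIcc).1
    have hAle : A ≤ 2 * d - 3 * m := by
      have : (m : ℚ) + m₀ ≤ d + 1 := by exact_mod_cast hother m hmIcc hne h0
      linarith
    have hnum : 0 ≤ (m : ℚ) * (m - 1) := by nlinarith
    rw [mul_div_right_comm _ (ν m : ℚ)]
    gcongr
  have hrest : ∑ m ∈ (Icc 2 d).erase m₀, (m : ℚ) * (m - 1) / (2 * d - 3 * m) * ν m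
      ≤ (d * (d - 1) - m₀ * (m₀ - 1)) / A := by
    calc _ ≤ ∑ m ∈ (Icc 2 d).erase m₀, (m : ℚ) * (m - 1) * ν m / A := sum_le_sum hterm
      _ = (∑ m ∈ Icc 2 d, (m : ℚ) * (m - 1) * ν m - m₀ * (m₀ - 1)) / A := by
        rw [← sum_div, ← sum_erase_add _ _ hm₀Icc, hν₀]; ring
      _ ≤ _ := by gcongr
  rw [poleCoeff, ← add_sum_erase _ _ hm₀Icc, hν₀]
  refine mul_neg_of_pos_of_neg (div_pos (by norm_num) (by linarith)) ?_
  have hkey := sub_one_sub_div_add_div_neg hm₀Q hm₀dQ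
  rw [show (2 * d - 3 * m₀ : ℚ) = -(3 * m₀ - 2 * d) by ring, div_neg]
  push_cast
  linarith

end LineArrangement

open LineArrangement in
theorem statement6_general (L : Finset (Submodule ℂ (Fin 3 → ℂ)))
    (d : ℕ) (hdcard : d = L.card) (hd2 : 2 ≤ d)
    (hL : ∀ ℓ ∈ L, finrank ℂ ℓ = 2)
    (hind : ∀ p : Submodule ℂ (Fin 3 → ℂ), finrank ℂ p = 1 →
      {ℓ : Submodule ℂ (Fin 3 → ℂ) | ℓ ∈ L ∧ p ≤ ℓ}.ncard ≤ d - 2)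
    (ν : ℕ → ℕ)
    (hν : ∀ m, 2 ≤ m → ν m =
      {p : Submodule ℂ (Fin 3 → ℂ) | finrank ℂ p = 1 ∧
        {ℓ : Submodule ℂ (Fin 3 → ℂ) | ℓ ∈ L ∧ p ≤ ℓ}.ncard = m}.ncard)
    (C : ℚ)
    (hC : C = 9 / ((d : ℚ) - 3) *
      ((d : ℚ) - 1 + ∑ m ∈ Finset.Icc 2 d,
        (m : ℚ) * ((m : ℚ) - 1) / (2 * (d : ℚ) - 3 * (m : ℚ)) * (ν m : ℚ))) :
    ((∀ m, 2 ≤ m → ν m ≠ 0 → 3 * m < 2 * d) → 0 < C) ∧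
      ((∃ m, 2 ≤ m ∧ ν m ≠ 0 ∧ 2 * d < 3 * m) → C < 0) := by
  subst hdcard
  simp only [ncard_setOf_mem_and_le] at hind hν
  change ∀ m, 2 ≤ m → ν m = (pointsOfMultiplicity L m).ncard at hν
  have hpoint {m : ℕ} (hm : 2 ≤ m) (hνm : ν m ≠ 0) : (pointsOfMultiplicity L m).Nonempty :=
    Set.nonempty_of_ncard_ne_zero (hν m hm ▸ hνm)
  have hd4 : 4 ≤ #L := by
    obtain ⟨p, hp, hp2⟩ := exists_two_le_multiplicity (by simp) hL hd2
    have := hind p hp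
    omega
  have hpairs : ∑ m ∈ Icc 2 #L, m * (m - 1) * ν m ≤ #L * (#L - 1) :=
    (sum_congr rfl fun m hm => by rw [hν m (mem_Icc.1 hm).1]).trans_le
      (sum_Icc_mul_ncard_pointsOfMultiplicity_le hL)
  rw [show C = poleCoeff #L ν from hC]
  refine ⟨fun hsmall => poleCoeff_pos hd4 fun m hm => hsmall m (mem_Icc.1 hm).1, ?_⟩
  rintro ⟨m₀, hm₀, hν₀, hlt⟩
  obtain ⟨p₀, hp₀, hp₀m⟩ := hpoint hm₀ hν₀
  have hm₀d : m₀ ≤ #L - 2 := hp₀m ▸ hind p₀ hp₀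
  refine poleCoeff_neg hlt (by omega) ?_ ?_ hpairs
  · have := ncard_pointsOfMultiplicity_le_one hL hm₀ (by omega)
    rw [hν m₀ hm₀] at hν₀ ⊢
    omega
  · intro m hm hne hνm
    obtain ⟨q, hq, hqm⟩ := hpoint (mem_Icc.1 hm).1 hνm
    have hqp₀ : q ≠ p₀ := by rintro rfl; exact hne (hqm.symm.trans hp₀m)
    have := multiplicity_add_multiplicity_le hL hq hp₀ hqp₀
    omega

/-- Proposition 1.8 (sign of the coefficient `C_{-3/d}`): for a finite set `L` of `d ≥ 2`
distinct lines in `ℙ²(ℂ)` (2-dimensional subspaces of `ℂ³`) with every point on at most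
`d - 2` of them, `νₘ` the number of points of multiplicity `m` (for `m ≥ 2`), assuming
`νₘ = 0` whenever `3m = 2d`, the coefficient
`C = (9/(d-3)) · (d - 1 + Σₘ m(m-1)νₘ/(2d-3m))` is positive if `3m < 2d` for every `m`
with `νₘ ≠ 0` (the origin is a good dense edge), and negative if `3m > 2d` for some such `m`. -/
theorem statement6 (L : Finset (Submodule ℂ (Fin 3 → ℂ)))
    (d : ℕ) (hdcard : d = L.card) (hd2 : 2 ≤ d)
    (hL : ∀ ℓ ∈ L, finrank ℂ ℓ = 2)
    (hind : ∀ p : Submodule ℂ (Fin 3 → ℂ), finrank ℂ p = 1 →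
      {ℓ : Submodule ℂ (Fin 3 → ℂ) | ℓ ∈ L ∧ p ≤ ℓ}.ncard ≤ d - 2)
    (ν : ℕ → ℕ)
    (hν : ∀ m, 2 ≤ m → ν m =
      {p : Submodule ℂ (Fin 3 → ℂ) | finrank ℂ p = 1 ∧
        {ℓ : Submodule ℂ (Fin 3 → ℂ) | ℓ ∈ L ∧ p ≤ ℓ}.ncard = m}.ncard)
    (hno : ∀ m, 2 ≤ m → 3 * m = 2 * d → ν m = 0)
    (C : ℚ)
    (hC : C = 9 / ((d : ℚ) - 3) *
      ((d : ℚ) - 1 + ∑ m ∈ Finset.Icc 2 d,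
        (m : ℚ) * ((m : ℚ) - 1) / (2 * (d : ℚ) - 3 * (m : ℚ)) * (ν m : ℚ))) :
    ((∀ m, 2 ≤ m → ν m ≠ 0 → 3 * m < 2 * d) → 0 < C) ∧
      ((∃ m, 2 ≤ m ∧ ν m ≠ 0 ∧ 2 * d < 3 * m) → C < 0) :=
  statement6_general L d hdcard hd2 hL hind ν hν C hC
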